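/- Let G be a finite group possessing a real element x and a real involution i with x, i not central, such that x and i commute, x has odd order coprime to 2, the conjugacy class size of x is even, the conjugacy class size of i is odd and greater than 1, and gcd(|x^G|, |i^G|) = 1. Then 2·p divides |(xi)^G| for every prime p dividing |i^G|. -/

import Mathlib

/-!
Since `x` has odd order and `i` is a commuting involution, `(x * i) ^ (orderOf x + 1) = x`,
so `x` and `i = x⁻¹ * (x * i)` are powers of `x * i`. Hence the centralizer of `x * i` lies in
those of `x` and `i`, and both `|x^G|` and `|i^G|` divide `|(x i)^G|`. As `|x^G|` is even and
every prime divisor `p` of `|i^G|` is odd, `2 * p` divides `|(x i)^G|`.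
-/

/-- An element `x` of a group is *real* if it is conjugate to its inverse. -/
def IsRealEl (G : Type*) [Group G] (x : G) : Prop := ∃ g : G, g⁻¹ * x * g = x⁻¹

/-- The size of the conjugacy class of `x` in `G`. -/
noncomputable def clSize (G : Type*) [Group G] (x : G) : ℕ := Nat.card {y : G // IsConj x y}

section ConjugacyClassSize

variable {G : Type*} [Group G]

lemma clSize_eq_index_centralizer (g : G) :
    clSize G g = (Subgroup.centralizer {g}).index := by
  have hclass : {y : G // IsConj g y} ≃ MulAction.orbit (ConjAct G) g :=
    Equiv.subtypeEquivRight fun y => by rw [ConjAct.mem_orbit_conjAct, isConj_comm]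
  rw [clSize, Nat.card_congr hclass, Nat.card_coe_set_eq, ← MulAction.index_stabilizer,
    Subgroup.centralizer_eq_comap_stabilizer]
  exact (Subgroup.index_comap_of_surjective _ (f := ConjAct.toConjAct.toMonoidHom)
    ConjAct.toConjAct.surjective).symm

lemma clSize_dvd_of_mem_zpowers {g h : G} (hg : g ∈ Subgroup.zpowers h) :
    clSize G g ∣ clSize G h := by
  rw [clSize_eq_index_centralizer, clSize_eq_index_centralizer]
  refine Subgroup.index_dvd_of_le fun z hz => ?_
  obtain ⟨k, rfl⟩ := Subgroup.mem_zpowers_iff.mp hg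
  rw [Subgroup.mem_centralizer_singleton_iff] at hz ⊢
  exact Commute.zpow_right hz k

end ConjugacyClassSize

lemma mem_zpowers_mul_of_odd_orderOf {G : Type*} [Group G] {x i : G} (hxi : Commute x i)
    (hi : i ^ 2 = 1) (hx : Odd (orderOf x)) : x ∈ Subgroup.zpowers (x * i) := by
  obtain ⟨m, hm⟩ := hx
  have hpow : (x * i) ^ (orderOf x + 1) = x := by
    rw [hxi.mul_pow, pow_succ, pow_orderOf_eq_one, one_mul, hm,
      show 2 * m + 1 + 1 = 2 * (m + 1) by ring, pow_mul, hi, one_pow, mul_one]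
  simpa only [hpow] using Subgroup.npow_mem_zpowers (x * i) (orderOf x + 1)

theorem stmt_13_general {G : Type*} [Group G] (x i : G)
    (hinv : i ^ 2 = 1)
    (hcomm : x * i = i * x) (hxodd : Odd (orderOf x))
    (hxeven : Even (clSize G x)) (hiodd : Odd (clSize G i)) :
    ∀ p : ℕ, p.Prime → p ∣ clSize G i → 2 * p ∣ clSize G (x * i) := by
  intro p _ hpi
  have hx : x ∈ Subgroup.zpowers (x * i) := mem_zpowers_mul_of_odd_orderOf hcomm hinv hxodd
  have hi : i ∈ Subgroup.zpowers (x * i) := by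
    simpa using Subgroup.mul_mem _ (Subgroup.inv_mem _ hx) (Subgroup.mem_zpowers (x * i))
  have hp_odd : Odd p := hiodd.of_dvd_nat hpi
  exact Nat.Coprime.mul_dvd_of_dvd_of_dvd (Nat.coprime_two_left.mpr hp_odd)
    (hxeven.two_dvd.trans (clSize_dvd_of_mem_zpowers hx))
    (hpi.trans (clSize_dvd_of_mem_zpowers hi))

theorem stmt_13 {G : Type*} [Group G] [Finite G] (x i : G)
    (hx : IsRealEl G x) (hi : IsRealEl G i)
    (hinv : i ^ 2 = 1) (hine : i ≠ 1)
    (hxnc : x ∉ Subgroup.center G) (hinc : i ∉ Subgroup.center G)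
    (hcomm : x * i = i * x) (hxodd : Odd (orderOf x))
    (hxeven : Even (clSize G x)) (hiodd : Odd (clSize G i)) (hione : 1 < clSize G i)
    (hcop : Nat.Coprime (clSize G x) (clSize G i)) :
    ∀ p : ℕ, p.Prime → p ∣ clSize G i → 2 * p ∣ clSize G (x * i) :=
  stmt_13_general x i hinv hcomm hxodd hxeven hiodd
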